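/- arXiv:2601.21121 — 4 statements merged into one kernel-verified Lean document; each statement's English description precedes it below -/
import Mathlib

section
/- Let m ∈ ℤ_{>0} be a divisor of ρ₀. If d_q = d_m for every q ∈ ℤ_{>0} with gcd(q, ρ₀) = m, then m does not divide the first elementary divisor e_{1,E} of G = G_E. -/
open scoped BigOperators

namespace ArrCode

variable {k n : ℕ}

/-- The integer matrix `G` with entries reduced modulo `q`. -/
def Gmod (G : Matrix (Fin k) (Fin n) ℤ) (q : ℕ) : Matrix (Fin k) (Fin n) (ZMod q) :=
  G.map (Int.cast : ℤ → ZMod q)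

/-- The code `C_G(q)` over `ℤ/qℤ` generated by the rows of `G`. -/
def code (G : Matrix (Fin k) (Fin n) ℤ) (q : ℕ) : Set (Fin n → ZMod q) :=
  Set.range fun u : Fin k → ZMod q => Matrix.vecMul u (Gmod G q)

/-- `H_J(q) = { u ∈ (ℤ/qℤ)^k : u · g^j = 0 for all j ∈ J }`. -/
def HJ (G : Matrix (Fin k) (Fin n) ℤ) (J : Finset (Fin n)) (q : ℕ) :
    Set (Fin k → ZMod q) :=
  {u | ∀ j ∈ J, Matrix.vecMul u (Gmod G q) j = 0}

/-- The rank `r(J)` over `ℚ` of the column submatrix `G_J`. -/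
noncomputable def rk (G : Matrix (Fin k) (Fin n) ℤ) (J : Finset (Fin n)) : ℕ :=
  Matrix.rank (Matrix.of fun (i : Fin k) (j : J) => (G i j.1 : ℚ))

/-- The gcd of all `j × j` minors of the column submatrix `G_J`
(determinants of submatrices with repeated rows or columns vanish,
so this agrees with the usual minor gcd). -/
def minorGcd (G : Matrix (Fin k) (Fin n) ℤ) (J : Finset (Fin n)) (j : ℕ) : ℕ :=
  Finset.gcd Finset.univ fun p : (Fin j → Fin k) × (Fin j → J) =>
    ((G.submatrix p.1 fun l => (p.2 l : Fin n)).det).natAbs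

/-- The `ℓ`-th elementary divisor (invariant factor) `e_{ℓ,J}` of `G_J`,
characterized by `e_{1,J} ⋯ e_{j,J} =` gcd of all `j × j` minors of `G_J`. -/
def elemDiv (G : Matrix (Fin k) (Fin n) ℤ) (J : Finset (Fin n)) (ℓ : ℕ) : ℕ :=
  minorGcd G J ℓ / minorGcd G J (ℓ - 1)

/-- The lcm period `ρ₀ = lcm { e_{r(J),J} : ∅ ≠ J ⊆ E }`. -/
noncomputable def lcmPeriod (G : Matrix (Fin k) (Fin n) ℤ) : ℕ :=
  Finset.lcm ((Finset.univ : Finset (Fin n)).powerset.filter fun J => J ≠ ∅)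
    fun J => elemDiv G J (rk G J)

/-- The minimum weight `d_q` of `C_G(q)` (equal to `+∞` when the code is trivial). -/
noncomputable def minWt (G : Matrix (Fin k) (Fin n) ℤ) (q : ℕ) : ℕ∞ :=
  ⨅ (c : Fin n → ZMod q) (_ : c ∈ code G q) (_ : c ≠ 0), (hammingNorm c : ℕ∞)

/-- `A_{G,i}(q)`: the number of codewords of `C_G(q)` of Hamming weight `i`. -/
noncomputable def A (G : Matrix (Fin k) (Fin n) ℤ) (q i : ℕ) : ℕ :=
  {c ∈ code G q | hammingNorm c = i}.ncard

/-- The characteristic quasi-polynomial value: the number of `u ∈ (ℤ/qℤ)^k`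
with every coordinate of `uG` nonzero. -/
noncomputable def chiQuasi (G : Matrix (Fin k) (Fin n) ℤ) (q : ℕ) : ℕ :=
  {u : Fin k → ZMod q | ∀ j, Matrix.vecMul u (Gmod G q) j ≠ 0}.ncard

/-- `Π_{ℓ=1}^{r(J)} gcd(m, e_{ℓ,J})`. -/
noncomputable def gcdProd (G : Matrix (Fin k) (Fin n) ℤ) (m : ℕ) (J : Finset (Fin n)) : ℕ :=
  ∏ ℓ ∈ Finset.Icc 1 (rk G J), Nat.gcd m (elemDiv G J ℓ)

/-- The constituent polynomial `f_i^m(t) ∈ ℚ[t]`. -/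
noncomputable def fPoly (G : Matrix (Fin k) (Fin n) ℤ) (m i : ℕ) : Polynomial ℚ :=
  ∑ J ∈ (Finset.univ : Finset (Fin n)).powerset.filter (fun J => J.card = n - i),
    ∑ K ∈ (Finset.univ : Finset (Fin n)).powerset.filter (fun K => J ⊆ K),
      Polynomial.C ((-1 : ℚ) ^ (K.card - J.card) *
          (gcdProd G m K : ℚ) / (gcdProd G m Finset.univ : ℚ)) *
        Polynomial.X ^ (rk G Finset.univ - rk G K)

/-- `d'_m`: the least positive `i` such that `f_i^m` is not the zero polynomial. -/
noncomputable def dPrime (G : Matrix (Fin k) (Fin n) ℤ) (m : ℕ) : ℕ :=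
  sInf {i : ℕ | 0 < i ∧ fPoly G m i ≠ 0}

end ArrCode

/-!
If `m` divides `e_{1,E}`, the gcd of the entries of `G`, then `G ≡ 0 (mod m)`, so `C_G(m) = 0`
and `d_m = ∞`. On the other hand `ρ₀ > 0`: some `r(J) × r(J)` minor of `G_J` is nonzero and the
minor gcds form a divisibility chain, so every `e_{r(J),J}` is positive. Hence for a prime `p`
larger than `ρ₀` and than `|g|` for a nonzero entry `g` of `G`, the modulus `q = m p` satisfies
`gcd(q, ρ₀) = m` but `q ∤ g`; the row of `G` containing `g` is then a nonzero codeword of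
`C_G(q)`, so `d_q < ∞ = d_m`.
-/

namespace ArrCode

open Matrix

section Minors

variable {K R m α : Type*}

lemma exists_linearIndependent_rows [Field K] [Finite m] [Fintype α] (A : Matrix m α K)
    {r : ℕ} (hr : A.rank = r) : ∃ p : Fin r → m, LinearIndependent K (A.row ∘ p) := by
  obtain ⟨κ, a, ha, hspan, hli⟩ := exists_linearIndependent' K A.row
  have : Finite κ := Finite.of_injective a ha
  cases nonempty_fintype κ
  have hcard : Fintype.card κ = r := by
    rw [linearIndependent_iff_card_eq_finrank_span.mp hli, Set.finrank, hspan, ← hr,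
      rank_eq_finrank_span_row]
  let e : κ ≃ Fin r := Fintype.equivFinOfCardEq hcard
  exact ⟨a ∘ e.symm, hli.comp e.symm e.symm.injective⟩

lemma exists_det_submatrix_ne_zero [Field K] [Finite m] [Fintype α] (A : Matrix m α K) :
    ∃ (p₁ : Fin A.rank → m) (p₂ : Fin A.rank → α), (A.submatrix p₁ p₂).det ≠ 0 := by
  obtain ⟨p₁, h₁⟩ := exists_linearIndependent_rows A rfl
  have hrank : (A.submatrix p₁ id)ᵀ.rank = A.rank := by
    rw [rank_transpose]
    simpa using LinearIndependent.rank_matrix (M := A.submatrix p₁ id) h₁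
  obtain ⟨p₂, h₂⟩ := exists_linearIndependent_rows _ hrank
  refine ⟨p₁, p₂, ?_⟩
  rw [← det_transpose]
  exact ((isUnit_iff_isUnit_det _).mp (linearIndependent_rows_iff_isUnit.mp h₂)).ne_zero

/-- Laplace expansion along the first row. -/
lemma dvd_det_submatrix_succ [CommRing R] (A : Matrix m α R) {d : R} {j : ℕ}
    (h : ∀ (p₁ : Fin j → m) (p₂ : Fin j → α), d ∣ (A.submatrix p₁ p₂).det)
    (p₁ : Fin (j + 1) → m) (p₂ : Fin (j + 1) → α) : d ∣ (A.submatrix p₁ p₂).det := by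
  rw [det_succ_row_zero]
  refine Finset.dvd_sum fun i _ => Dvd.dvd.mul_left ?_ _
  rw [submatrix_submatrix]
  exact h _ _

end Minors

section ElementaryDivisors

variable {k n : ℕ} (G : Matrix (Fin k) (Fin n) ℤ) (J : Finset (Fin n))

lemma minorGcd_dvd_det (j : ℕ) (p₁ : Fin j → Fin k) (p₂ : Fin j → J) :
    (minorGcd G J j : ℤ) ∣ (G.submatrix p₁ fun l => (p₂ l : Fin n)).det :=
  Int.natCast_dvd.mpr (Finset.gcd_dvd (Finset.mem_univ (p₁, p₂)))

lemma dvd_minorGcd {d j : ℕ}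
    (h : ∀ (p₁ : Fin j → Fin k) (p₂ : Fin j → J),
      (d : ℤ) ∣ (G.submatrix p₁ fun l => (p₂ l : Fin n)).det) :
    d ∣ minorGcd G J j :=
  Finset.dvd_gcd fun p _ => Int.natCast_dvd.mp (h p.1 p.2)

lemma minorGcd_zero : minorGcd G J 0 = 1 :=
  Nat.dvd_one.mp <| Int.natCast_dvd_natCast.mp <| by
    simpa using minorGcd_dvd_det G J 0 Fin.elim0 Fin.elim0

lemma minorGcd_dvd_minorGcd_succ (j : ℕ) : minorGcd G J j ∣ minorGcd G J (j + 1) :=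
  dvd_minorGcd G J fun p₁ p₂ =>
    dvd_det_submatrix_succ (G.submatrix id ((↑) : J → Fin n)) (minorGcd_dvd_det G J j) p₁ p₂

lemma minorGcd_rk_pos : 0 < minorGcd G J (rk G J) := by
  obtain ⟨p₁, p₂, hdet⟩ :=
    exists_det_submatrix_ne_zero (Matrix.of fun (i : Fin k) (j : J) => (G i j.1 : ℚ))
  refine Nat.pos_of_ne_zero fun h0 => hdet ?_
  have hzero := minorGcd_dvd_det G J _ p₁ p₂
  rw [rk] at h0
  rw [h0, Nat.cast_zero, zero_dvd_iff] at hzero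
  have hcast : (Matrix.of fun (i : Fin k) (j : J) => (G i j.1 : ℚ)).submatrix p₁ p₂ =
      (Int.castRingHom ℚ).mapMatrix (G.submatrix p₁ fun l => (p₂ l : Fin n)) := rfl
  rw [hcast, ← RingHom.map_det, hzero, map_zero]

lemma elemDiv_rk_pos : 0 < elemDiv G J (rk G J) := by
  have hpos := minorGcd_rk_pos G J
  cases h : rk G J with
  | zero => simp [elemDiv, minorGcd_zero]
  | succ r =>
    rw [h] at hpos
    have hdvd := minorGcd_dvd_minorGcd_succ G J r
    rw [elemDiv, Nat.add_sub_cancel]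
    exact Nat.div_pos (Nat.le_of_dvd hpos hdvd) (Nat.pos_of_dvd_of_pos hdvd hpos)

lemma elemDiv_one : elemDiv G J 1 = minorGcd G J 1 := by
  simp [elemDiv, minorGcd_zero]

lemma minorGcd_one_dvd_entry (i : Fin k) {j : Fin n} (hj : j ∈ J) :
    (minorGcd G J 1 : ℤ) ∣ G i j := by
  simpa using minorGcd_dvd_det G J 1 (fun _ => i) (fun _ => ⟨j, hj⟩)

lemma lcmPeriod_pos : 0 < lcmPeriod G :=
  Nat.pos_of_ne_zero fun h => by
    obtain ⟨J, -, hJ⟩ := Finset.lcm_eq_zero_iff.mp h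
    exact (elemDiv_rk_pos G J).ne' hJ

end ElementaryDivisors

lemma minWt_eq_top_iff {k n q : ℕ} {G : Matrix (Fin k) (Fin n) ℤ} :
    minWt G q = ⊤ ↔ ∀ i j, (q : ℤ) ∣ G i j := by
  have hcode : minWt G q = ⊤ ↔ ∀ c ∈ code G q, c = 0 := by
    simp [minWt, iInf_eq_top]
  rw [hcode]
  constructor
  · intro h i j
    simpa [single_vecMul, Gmod, ZMod.intCast_zmod_eq_zero_iff_dvd] using
      congrFun (h _ ⟨Pi.single i 1, rfl⟩) j
  · rintro h _ ⟨u, rfl⟩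
    have hGq : Gmod G q = 0 := by
      ext i j
      exact (ZMod.intCast_zmod_eq_zero_iff_dvd _ _).mpr (h i j)
    simp [hGq]

lemma exists_gt_gcd_mul_eq {m ρ : ℕ} (hρ : 0 < ρ) (hm : m ∣ ρ) (N : ℕ) :
    ∃ p, N < p ∧ Nat.gcd (m * p) ρ = m := by
  obtain ⟨p, hle, hp⟩ := Nat.exists_infinite_primes (max ρ N + 1)
  have hcop : p.Coprime ρ := hp.coprime_iff_not_dvd.mpr fun hdvd => by
    have := Nat.le_of_dvd hρ hdvd
    omega
  exact ⟨p, by omega, by rw [hcop.gcd_mul_right_cancel, Nat.gcd_eq_left hm]⟩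

theorem stmt2_general (k n : ℕ) (hn : 1 ≤ n) (G : Matrix (Fin k) (Fin n) ℤ)
    (hG : ∀ j : Fin n, ∃ i : Fin k, G i j ≠ 0)
    (m : ℕ) (hm : 0 < m) (hmdvd : m ∣ lcmPeriod G)
    (hconst : ∀ q : ℕ, 0 < q → Nat.gcd q (lcmPeriod G) = m → minWt G q = minWt G m) :
    ¬ m ∣ elemDiv G Finset.univ 1 := by
  intro hdiv
  rw [elemDiv_one] at hdiv
  have hGm : minWt G m = ⊤ := minWt_eq_top_iff.mpr fun i j =>
    (Int.natCast_dvd_natCast.mpr hdiv).trans (minorGcd_one_dvd_entry G _ i (Finset.mem_univ j))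
  let j₀ : Fin n := ⟨0, hn⟩
  obtain ⟨i₀, hi₀⟩ := hG j₀
  obtain ⟨p, hp, hgcd⟩ := exists_gt_gcd_mul_eq (lcmPeriod_pos G) hmdvd (G i₀ j₀).natAbs
  have hGq : minWt G (m * p) = ⊤ :=
    (hconst _ (Nat.mul_pos hm (Nat.zero_lt_of_lt hp)) hgcd).trans hGm
  have hle := Int.natAbs_le_of_dvd_ne_zero (minWt_eq_top_iff.mp hGq i₀ j₀) hi₀
  rw [Int.natAbs_natCast] at hle
  have hp_le : p ≤ m * p := Nat.le_mul_of_pos_left p hm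
  omega

theorem stmt2 (k n : ℕ) (hk : 1 ≤ k) (hn : 1 ≤ n) (G : Matrix (Fin k) (Fin n) ℤ)
    (hG : ∀ j : Fin n, ∃ i : Fin k, G i j ≠ 0)
    (m : ℕ) (hm : 0 < m) (hmdvd : m ∣ lcmPeriod G)
    (hconst : ∀ q : ℕ, 0 < q → Nat.gcd q (lcmPeriod G) = m → minWt G q = minWt G m) :
    ¬ m ∣ elemDiv G Finset.univ 1 :=
  stmt2_general k n hn G hG m hm hmdvd hconst

end ArrCode
end

section
/- For every subset J ⊆ E and every q ∈ ℤ_{>0}, the cardinality of H_J(q) equals (Π_{ℓ=1}^{r(J)} gcd(q, e_{ℓ,J})) · q^{k − r(J)}. -/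
open scoped BigOperators

/-!
Write `A` for the column submatrix `G_J`. The Smith normal form of the lattice spanned by the
columns of `A` gives `A = P E B` and `P E = A C` with `P` unimodular and `E` having one nonzero
entry `a_i` in each column `i`, in pairwise distinct rows `f i`. Hence `u A ≡ 0 (mod q)` iff
`a_i (u P)_{f i} ≡ 0` for all `i`, which has `∏ gcd(q, a_i) · q^(k - m)` solutions, and `m = r(J)`.
The same two factorizations show that `A` and `diag(a)` have the same gcds of `j × j` minors,
namely the gcds `D_j` of the `j`-fold products of the `a_i`. The `a_i` need not form a divisor
chain, but replacing two of them by their gcd and lcm changes neither the `D_j` nor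
`∏ gcd(q, a_i)`, and such moves reach a chain `c_1 ∣ ⋯ ∣ c_m`, for which `D_j / D_(j-1) = c_j`.
-/

open Relation

theorem Nat.gcd_mul_gcd_eq_gcd_gcd_mul_gcd_lcm (q x y : ℕ) :
    q.gcd x * q.gcd y = q.gcd (x.gcd y) * q.gcd (x.lcm y) := by
  rcases Nat.eq_zero_or_pos x with rfl | hx
  · simp [mul_comm]
  rcases Nat.eq_zero_or_pos y with rfl | hy
  · simp
  rcases Nat.eq_zero_or_pos q with rfl | hq
  · simp [Nat.gcd_mul_lcm]
  -- On the exponent of each prime: `min e a + min e b = min e (min a b) + min e (max a b)`.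
  have hq' (z : ℕ) : q.gcd z ≠ 0 := (Nat.gcd_pos_of_pos_left z hq).ne'
  refine Nat.factorization_inj (mul_ne_zero (hq' _) (hq' _)) (mul_ne_zero (hq' _) (hq' _)) ?_
  simp only [Nat.factorization_mul (hq' _) (hq' _), Nat.factorization_gcd hq.ne' hx.ne',
    Nat.factorization_gcd hq.ne' hy.ne',
    Nat.factorization_gcd hq.ne' (Nat.gcd_pos_of_pos_left y hx).ne',
    Nat.factorization_gcd hq.ne' (Nat.lcm_pos hx hy).ne', Nat.factorization_gcd hx.ne' hy.ne',
    Nat.factorization_lcm hx.ne' hy.ne']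
  ext p
  simp only [Finsupp.add_apply, Finsupp.inf_apply, Finsupp.sup_apply]
  omega

namespace Multiset

def subprodGcd (j : ℕ) (s : Multiset ℕ) : ℕ :=
  ((s.powersetCard j).map prod).gcd

@[simp]
theorem subprodGcd_zero (s : Multiset ℕ) : subprodGcd 0 s = 1 := by
  simp [subprodGcd]

theorem subprodGcd_of_card_lt {j : ℕ} {s : Multiset ℕ} (h : card s < j) : subprodGcd j s = 0 := by
  simp [subprodGcd, powersetCard_eq_empty _ h]

theorem subprodGcd_succ_cons (j x : ℕ) (s : Multiset ℕ) :
    subprodGcd (j + 1) (x ::ₘ s) = (subprodGcd (j + 1) s).gcd (x * subprodGcd j s) := by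
  have : ((powersetCard j s).map (cons x)).map prod =
      ((powersetCard j s).map prod).map (x * ·) := by
    simp [map_map]
  rw [subprodGcd, powersetCard_cons, map_add, gcd_add, this, gcd_map_mul, normalize_eq]
  rfl

theorem subprodGcd_one (s : Multiset ℕ) : subprodGcd 1 s = s.gcd := by
  induction s using Multiset.induction with
  | empty => rfl
  | cons x s ih =>
    rw [subprodGcd_succ_cons, ih, subprodGcd_zero, mul_one, gcd_cons, gcd_comm]
    rfl

theorem subprodGcd_add_two_cons_cons (j x y : ℕ) (s : Multiset ℕ) :
    subprodGcd (j + 2) (x ::ₘ y ::ₘ s) = (subprodGcd (j + 2) s).gcd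
      ((x.gcd y * subprodGcd (j + 1) s).gcd (x * y * subprodGcd j s)) := by
  rw [subprodGcd_succ_cons, subprodGcd_succ_cons, subprodGcd_succ_cons, ← Nat.gcd_mul_left,
    Nat.gcd_assoc, ← Nat.gcd_assoc (y * _), mul_comm y, mul_comm x (subprodGcd _ s),
    Nat.gcd_mul_left, mul_comm _ (y.gcd x), Nat.gcd_comm y, mul_assoc]

theorem subprodGcd_gcd_lcm (j x y : ℕ) (s : Multiset ℕ) :
    subprodGcd j (x.gcd y ::ₘ x.lcm y ::ₘ s) = subprodGcd j (x ::ₘ y ::ₘ s) := by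
  have hdvd : x.gcd y ∣ x.lcm y := (Nat.gcd_dvd_left x y).trans (Nat.dvd_lcm_left x y)
  match j with
  | 0 => simp
  | 1 => simp only [subprodGcd_one, gcd_cons, gcd_eq_nat_gcd, ← Nat.gcd_assoc,
      Nat.gcd_eq_left hdvd]
  | j + 2 => rw [subprodGcd_add_two_cons_cons, subprodGcd_add_two_cons_cons,
      Nat.gcd_eq_left hdvd, Nat.gcd_mul_lcm]

theorem subprodGcd_eq_prod_take_of_pairwise {l : List ℕ} (hl : l.Pairwise (· ∣ ·)) {j : ℕ}
    (hj : j ≤ l.length) : subprodGcd j l = (l.take j).prod := by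
  induction l generalizing j with
  | nil => simp_all
  | cons x l ih =>
    obtain ⟨hx, hl⟩ := List.pairwise_cons.1 hl
    match j with
    | 0 => simp
    | j + 1 =>
      rw [← cons_coe, subprodGcd_succ_cons, ih hl (j := j) (by simpa using hj),
        List.take_succ_cons, List.prod_cons]
      rcases (Nat.lt_succ_iff.1 hj).lt_or_eq with hlt | rfl
      · rw [ih hl (j := j + 1) hlt, Nat.gcd_eq_right]
        rw [List.prod_take_succ l j hlt, mul_comm]
        exact mul_dvd_mul_left _ (hx _ (List.getElem_mem hlt))
      · rw [subprodGcd_of_card_lt (by simp), Nat.gcd_zero_left]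

def GcdLcmStep (s t : Multiset ℕ) : Prop :=
  ∃ x y u, s = x ::ₘ y ::ₘ u ∧ t = x.gcd y ::ₘ x.lcm y ::ₘ u

namespace GcdLcmStep

variable {s t : Multiset ℕ}

theorem cons (a : ℕ) (h : GcdLcmStep s t) : GcdLcmStep (a ::ₘ s) (a ::ₘ t) := by
  obtain ⟨x, y, u, rfl, rfl⟩ := h
  exact ⟨x, y, a ::ₘ u, by simp only [cons_swap a], by simp only [cons_swap a]⟩

theorem card_eq (h : GcdLcmStep s t) : card s = card t := by
  obtain ⟨x, y, u, rfl, rfl⟩ := h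
  simp

theorem subprodGcd_eq (j : ℕ) (h : GcdLcmStep s t) : subprodGcd j s = subprodGcd j t := by
  obtain ⟨x, y, u, rfl, rfl⟩ := h
  exact (subprodGcd_gcd_lcm j x y u).symm

theorem prod_map_gcd_eq (q : ℕ) (h : GcdLcmStep s t) :
    (s.map q.gcd).prod = (t.map q.gcd).prod := by
  obtain ⟨x, y, u, rfl, rfl⟩ := h
  simp only [map_cons, prod_cons, ← mul_assoc]
  rw [Nat.gcd_mul_gcd_eq_gcd_gcd_mul_gcd_lcm]

theorem reflTransGen_eq {β : Type*} {φ : Multiset ℕ → β}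
    (hφ : ∀ ⦃s t⦄, GcdLcmStep s t → φ s = φ t) (h : ReflTransGen GcdLcmStep s t) : φ s = φ t := by
  simpa only [reflTransGen_eq_self] using h.lift φ hφ

end GcdLcmStep

theorem exists_pairwise_dvd_of_cons_pairwise_dvd (x : ℕ) {l : List ℕ} (hl : l.Pairwise (· ∣ ·)) :
    ∃ l' : List ℕ, l'.Pairwise (· ∣ ·) ∧ ReflTransGen GcdLcmStep (x ::ₘ l) l' := by
  induction l generalizing x with
  | nil => exact ⟨[x], List.pairwise_singleton _ _, ReflTransGen.refl⟩
  | cons c l ih =>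
    obtain ⟨hc, hl⟩ := List.pairwise_cons.1 hl
    obtain ⟨l', hl', hsteps⟩ := ih (x.lcm c) hl
    refine ⟨x.gcd c :: l', List.pairwise_cons.2 ⟨fun z hz => ?_, hl'⟩, ?_⟩
    -- `d` divides every element iff `d ∣ subprodGcd 1`, and the moves preserve `subprodGcd 1`.
    · have hdvd : x.gcd c ∣ (x.lcm c ::ₘ (l : Multiset ℕ)).gcd := by
        refine dvd_gcd.2 fun w hw => ?_
        rcases mem_cons.1 hw with rfl | hw
        · exact (Nat.gcd_dvd_left x c).trans (Nat.dvd_lcm_left x c)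
        · exact (Nat.gcd_dvd_right x c).trans (hc w hw)
      rw [← subprodGcd_one, GcdLcmStep.reflTransGen_eq (fun _ _ h => h.subprodGcd_eq 1) hsteps,
        subprodGcd_one] at hdvd
      exact hdvd.trans (gcd_dvd (by simpa using hz))
    · refine ReflTransGen.head ⟨x, c, l, rfl, rfl⟩ ?_
      exact hsteps.lift (x.gcd c ::ₘ ·) fun _ _ h => h.cons _

theorem exists_pairwise_dvd (s : Multiset ℕ) :
    ∃ l : List ℕ, l.Pairwise (· ∣ ·) ∧ ReflTransGen GcdLcmStep s l := by
  induction s using Multiset.induction with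
  | empty => exact ⟨[], List.Pairwise.nil, ReflTransGen.refl⟩
  | cons x s ih =>
    obtain ⟨l, hl, hsl⟩ := ih
    obtain ⟨l', hl', hll'⟩ := exists_pairwise_dvd_of_cons_pairwise_dvd x hl
    exact ⟨l', hl', (hsl.lift (x ::ₘ ·) fun _ _ h => h.cons x).trans hll'⟩

theorem subprodGcd_div_subprodGcd_of_pairwise {l : List ℕ} (hl : l.Pairwise (· ∣ ·))
    (h0 : 0 ∉ l) {i : ℕ} (hi : i < l.length) :
    subprodGcd (i + 1) l / subprodGcd i l = l[i] := by
  have hpos : 0 < (l.take i).prod :=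
    List.prod_pos fun x hx => Nat.pos_of_ne_zero fun h => h0 (h ▸ List.mem_of_mem_take hx)
  rw [subprodGcd_eq_prod_take_of_pairwise hl hi, subprodGcd_eq_prod_take_of_pairwise hl hi.le,
    List.prod_take_succ l i hi, Nat.mul_div_cancel_left _ hpos]

theorem prod_gcd_subprodGcd_div (s : Multiset ℕ) (hs : 0 ∉ s) (q : ℕ) :
    ∏ j ∈ Finset.Icc 1 (card s), q.gcd (subprodGcd j s / subprodGcd (j - 1) s) =
      (s.map q.gcd).prod := by
  obtain ⟨l, hl, hsl⟩ := exists_pairwise_dvd s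
  have hprod (q : ℕ) : (s.map q.gcd).prod = (l.map q.gcd).prod :=
    GcdLcmStep.reflTransGen_eq (fun _ _ h => h.prod_map_gcd_eq q) hsl
  -- For `q = 0` the invariant `hprod` says that `s` and `l` have the same product.
  have h0 : 0 ∉ l := fun hl0 => hs <| prod_eq_zero_iff.1 <| by
    simpa [show Nat.gcd 0 = id from funext Nat.gcd_zero_left, List.prod_eq_zero hl0] using hprod 0
  have hD (j : ℕ) : subprodGcd j s = subprodGcd j l :=
    GcdLcmStep.reflTransGen_eq (fun _ _ h => h.subprodGcd_eq j) hsl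
  simp only [hD, GcdLcmStep.reflTransGen_eq (fun _ _ h => h.card_eq) hsl, hprod, coe_card,
    ← Finset.Ico_add_one_right_eq_Icc, Finset.prod_Ico_eq_prod_range, ← Fin.prod_univ_eq_prod_range]
  rw [← Fin.prod_univ_fun_getElem]
  refine Finset.prod_congr rfl fun i _ => ?_
  have hi : (i : ℕ) < l.length := by omega
  simp only [add_comm 1, Nat.add_sub_cancel, subprodGcd_div_subprodGcd_of_pairwise hl h0 hi]

end Multiset

open Multiset (subprodGcd)

theorem Finset.subprodGcd_val_map {ι : Type*} (S : Finset ι) (w : ι → ℕ) (j : ℕ) :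
    subprodGcd j (S.val.map w) = (S.powersetCard j).gcd fun T => ∏ x ∈ T, w x := by
  rw [subprodGcd, Multiset.powersetCard_map, ← S.map_val_val_powersetCard, Finset.gcd_def]
  simp only [Multiset.map_map, Function.comp_def, Finset.prod_eq_multiset_prod]

theorem ZMod.ncard_setOf_mul_intCast_eq_zero {q : ℕ} [NeZero q] (c : ℤ) :
    {x : ZMod q | x * c = 0}.ncard = q.gcd c.natAbs := by
  have hker : {x : ZMod q | x * c = 0} = (nsmulAddMonoidHom c.natAbs : ZMod q →+ ZMod q).ker := by
    ext x
    rcases Int.natAbs_eq c with hc | hc <;>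
      rw [Set.mem_ofPred_eq, hc] <;> simp [nsmul_eq_mul, mul_comm]
  rw [hker, ← Nat.card_coe_set_eq, SetLike.coe_sort_coe, IsAddCyclic.card_nsmulAddMonoidHom_ker,
    Nat.card_zmod]

theorem Set.ncard_setOf_forall_apply_embedding {ι α R : Type*} [Fintype ι] [Fintype α] [Finite R]
    (f : ι ↪ α) (p : ι → R → Prop) :
    {v : α → R | ∀ i, p i (v (f i))}.ncard =
      (∏ i, {x | p i x}.ncard) * Nat.card R ^ (Fintype.card α - Fintype.card ι) := by
  classical
  let e : {v : α → R // ∀ i, p i (v (f i))} ≃ ∀ s, {x : R // ∀ i, f i = s → p i x} :=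
    (Equiv.subtypeEquivRight fun v => ⟨fun h s i hi => hi ▸ h i, fun h i => h _ i rfl⟩).trans
      (Equiv.subtypePiEquivPi (p := fun s x => ∀ i, f i = s → p i x))
  rw [← Nat.card_coe_set_eq, Set.coe_ofPred, Nat.card_congr e, Nat.card_pi,
    ← Finset.prod_mul_prod_compl (Finset.univ.map f), Finset.prod_map]
  congr 1
  · refine Finset.prod_congr rfl fun i _ => ?_
    rw [← Nat.card_coe_set_eq]
    exact Nat.card_congr (Equiv.subtypeEquivRight fun x =>
      ⟨fun h => h i rfl, fun h i' hi' => f.injective hi' ▸ h⟩)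
  · have hfree (s) (hs : s ∈ (Finset.univ.map f)ᶜ) :
        Nat.card {x : R // ∀ i, f i = s → p i x} = Nat.card R :=
      Nat.card_congr (Equiv.subtypeUnivEquiv fun x i hi => absurd (hi ▸ Finset.mem_map_of_mem f
        (Finset.mem_univ i)) (Finset.mem_compl.1 hs))
    rw [Finset.prod_congr rfl hfree, Finset.prod_const, Finset.card_compl, Finset.card_map,
      Finset.card_univ]

namespace Matrix

variable {α β γ ι : Type*} [Fintype α] [Fintype β] [Fintype γ] [Fintype ι]

theorem det_mul_eq_sum {R : Type*} [CommRing R] [DecidableEq ι] (M : Matrix ι γ R)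
    (N : Matrix γ ι R) :
    (M * N).det = ∑ r : ι → γ, (∏ i, M i (r i)) * (N.submatrix r id).det := by
  have hrows : M * N = of fun i => ∑ t, M i t • N t := by
    ext i l
    simp [mul_apply, Finset.sum_apply]
  rw [hrows]
  exact (detRowAlternating.toMultilinearMap.map_sum _).trans <| Finset.sum_congr rfl fun r _ =>
    detRowAlternating.toMultilinearMap.map_smul_univ (fun i => M i (r i)) fun i => N (r i)

def gcdMinors (M : Matrix α β ℤ) (j : ℕ) : ℕ :=
  Finset.univ.gcd fun p : (Fin j → α) × (Fin j → β) => (M.submatrix p.1 p.2).det.natAbs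

theorem gcdMinors_dvd_det (M : Matrix α β ℤ) {j : ℕ} (f : Fin j → α) (g : Fin j → β) :
    (M.gcdMinors j : ℤ) ∣ (M.submatrix f g).det :=
  Int.natCast_dvd.2 (Finset.gcd_dvd (Finset.mem_univ (f, g)))

theorem dvd_gcdMinors {M : Matrix α β ℤ} {j d : ℕ}
    (h : ∀ (f : Fin j → α) (g : Fin j → β), (d : ℤ) ∣ (M.submatrix f g).det) :
    d ∣ M.gcdMinors j :=
  Finset.dvd_gcd fun p _ => Int.natCast_dvd.1 (h p.1 p.2)

theorem gcdMinors_transpose (M : Matrix α β ℤ) (j : ℕ) : Mᵀ.gcdMinors j = M.gcdMinors j := by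
  refine Nat.dvd_antisymm (dvd_gcdMinors fun f g => ?_) (dvd_gcdMinors fun f g => ?_)
  · simpa [← transpose_submatrix] using Mᵀ.gcdMinors_dvd_det g f
  · simpa [← transpose_submatrix] using M.gcdMinors_dvd_det g f

theorem gcdMinors_dvd_gcdMinors_mul_left (M : Matrix α γ ℤ) (N : Matrix γ β ℤ) (j : ℕ) :
    N.gcdMinors j ∣ (M * N).gcdMinors j := by
  refine dvd_gcdMinors fun f g => ?_
  rw [submatrix_mul _ _ f id g Function.bijective_id, det_mul_eq_sum]
  exact Finset.dvd_sum fun r _ => dvd_mul_of_dvd_right (N.gcdMinors_dvd_det r g) _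

theorem gcdMinors_dvd_gcdMinors_mul_right (M : Matrix α γ ℤ) (N : Matrix γ β ℤ) (j : ℕ) :
    M.gcdMinors j ∣ (M * N).gcdMinors j := by
  have := gcdMinors_dvd_gcdMinors_mul_left Nᵀ Mᵀ j
  rwa [← transpose_mul, gcdMinors_transpose, gcdMinors_transpose] at this

theorem gcdMinors_eq_of_mul_eq {α' β' : Type*} [Fintype α'] [Fintype β'] {A : Matrix α β ℤ}
    {D : Matrix α' β' ℤ} {X : Matrix α α' ℤ} {Y : Matrix β' β ℤ} {X' : Matrix α' α ℤ}
    {Y' : Matrix β β' ℤ} (hA : A = X * D * Y) (hD : D = X' * A * Y') (j : ℕ) :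
    A.gcdMinors j = D.gcdMinors j := by
  refine Nat.dvd_antisymm ?_ ?_
  · rw [hD]
    exact (gcdMinors_dvd_gcdMinors_mul_left X' A j).trans
      (gcdMinors_dvd_gcdMinors_mul_right _ Y' j)
  · rw [hA]
    exact (gcdMinors_dvd_gcdMinors_mul_left X D j).trans (gcdMinors_dvd_gcdMinors_mul_right _ Y j)

theorem gcdMinors_diagonal [DecidableEq ι] (a : ι → ℤ) (j : ℕ) :
    (diagonal a).gcdMinors j = subprodGcd j (Finset.univ.val.map fun i => (a i).natAbs) := by
  rw [Finset.subprodGcd_val_map]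
  refine Nat.dvd_antisymm (Finset.dvd_gcd fun T hT => ?_) (dvd_gcdMinors fun g h => ?_)
  · have hcard := (Finset.mem_powersetCard.1 hT).2
    let e : Fin j ↪ ι := ⟨_, Subtype.val_injective.comp (T.equivFinOfCardEq hcard).symm.injective⟩
    have hprod : ∏ x ∈ T, (a x).natAbs = ((diagonal a).submatrix e e).det.natAbs := by
      rw [submatrix_diagonal_embedding, det_diagonal,
        show (∏ l, (a ∘ e) l).natAbs = ∏ l, (a (e l)).natAbs from map_prod Int.natAbsHom _ _,
        ← Finset.prod_coe_sort, ← (T.equivFinOfCardEq hcard).symm.prod_comp]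
      rfl
    rw [hprod]
    exact Int.natCast_dvd.1 ((diagonal a).gcdMinors_dvd_det e e)
  · by_cases hinj : Function.Injective h
    · have hcols : (diagonal a).submatrix g h =
          of fun l s => (a ∘ h) s * (1 : Matrix ι ι ℤ).submatrix g h l s := by
        ext l s
        by_cases hls : g l = h s <;> simp [one_apply, hls]
      rw [hcols, det_mul_row]
      refine dvd_mul_of_dvd_left (Int.natCast_dvd.2 ?_) _
      rw [show (∏ s, (a ∘ h) s).natAbs = ∏ s, (a (h s)).natAbs from map_prod Int.natAbsHom _ _]
      exact (Finset.gcd_dvd (Finset.mem_powersetCard.2 ⟨Finset.subset_univ _, by simp⟩)).trans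
        (dvd_of_eq (Finset.prod_map Finset.univ ⟨h, hinj⟩ _))
    · obtain ⟨s, s', hss', hne⟩ := Function.not_injective_iff.1 hinj
      rw [det_zero_of_column_eq hne fun l => by simp [hss']]
      exact dvd_zero _

theorem rank_eq_of_mul_eq {R α' β' : Type*} [CommRing R] [StrongRankCondition R] [Fintype α']
    [Fintype β'] {A : Matrix α β R} {D : Matrix α' β' R} {X : Matrix α α' R} {Y : Matrix β' β R}
    {X' : Matrix α' α R} {Y' : Matrix β β' R} (hA : A = X * D * Y) (hD : D = X' * A * Y') :
    A.rank = D.rank := by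
  refine le_antisymm ?_ ?_
  · rw [hA]
    exact (rank_mul_le_left _ _).trans (rank_mul_le_right _ _)
  · rw [hD]
    exact (rank_mul_le_left _ _).trans (rank_mul_le_right _ _)

theorem vecMul_eq_zero_iff_of_mul_eq {R κ : Type*} [Semiring R] [Fintype κ] {A : Matrix α ι R}
    {B : Matrix α κ R} {Y : Matrix κ ι R} {Z : Matrix ι κ R} (hA : A = B * Y) (hB : B = A * Z)
    (u : α → R) : u ᵥ* A = 0 ↔ u ᵥ* B = 0 := by
  constructor <;> intro h
  · rw [hB, ← vecMul_vecMul, h, zero_vecMul]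
  · rw [hA, ← vecMul_vecMul, h, zero_vecMul]

variable [DecidableEq α]

/-- A Smith normal form of the lattice spanned by the columns of `A`, as matrix identities. -/
structure SmithFactorization (A : Matrix α ι ℤ) where
  m : ℕ
  P : Matrix α α ℤ
  f : Fin m ↪ α
  a : Fin m → ℤ
  B : Matrix (Fin m) ι ℤ
  C : Matrix ι (Fin m) ℤ
  isUnit_P : IsUnit P
  a_ne_zero : ∀ i, a i ≠ 0
  eq_mul : A = P.submatrix id f * diagonal a * B
  mul_eq : P.submatrix id f * diagonal a = A * C

theorem nonempty_smithFactorization (A : Matrix α ι ℤ) : Nonempty A.SmithFactorization := by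
  obtain ⟨m, bM, bN, f, a, snf⟩ :=
    (Submodule.span ℤ (Set.range fun j s => A s j)).smithNormalForm (Pi.basisFun ℤ α)
  have hcol (j : ι) : (fun s => A s j) ∈ Submodule.span ℤ (Set.range fun j s => A s j) :=
    Submodule.subset_span ⟨j, rfl⟩
  choose c hc using fun i => (Submodule.mem_span_range_iff_exists_fun ℤ).1 (bN i).2
  have hP (s t : α) : (Pi.basisFun ℤ α).toMatrix bM s t = bM t s := by
    rw [Module.Basis.toMatrix_apply, Pi.basisFun_repr]
  refine ⟨m, (Pi.basisFun ℤ α).toMatrix bM, f, a, of fun i j => bN.repr ⟨fun s => A s j, hcol j⟩ i,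
    of fun j i => c i j, ?_, fun i ha => ?_, ?_, ?_⟩
  · have := (Pi.basisFun ℤ α).invertibleToMatrix bM
    exact isUnit_of_invertible _
  · exact bN.ne_zero i (Subtype.ext (by simp [snf, ha]))
  · ext s j
    have := congrFun (congrArg Subtype.val (bN.sum_repr ⟨fun s => A s j, hcol j⟩)) s
    simp only [Submodule.coe_sum, Submodule.coe_smul, snf, Finset.sum_apply, Pi.smul_apply,
      smul_eq_mul] at this
    rw [← this, mul_apply]
    simp only [mul_diagonal, submatrix_apply, id, hP, of_apply]
    exact Finset.sum_congr rfl fun i _ => by ring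
  · ext s i
    have := congrFun (hc i) s
    simp only [snf, Finset.sum_apply, Pi.smul_apply, smul_eq_mul] at this
    rw [mul_diagonal]
    simp only [submatrix_apply, id, hP, mul_apply, of_apply]
    rw [mul_comm, ← this]
    exact Finset.sum_congr rfl fun j _ => mul_comm _ _

namespace SmithFactorization

variable {A : Matrix α ι ℤ} (S : A.SmithFactorization)

theorem diagonal_eq : diagonal S.a = (S.P⁻¹).submatrix S.f id * A * S.C := by
  rw [Matrix.mul_assoc, ← S.mul_eq, ← Matrix.mul_assoc,
    ← submatrix_mul _ _ _ _ _ Function.bijective_id,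
    nonsing_inv_mul _ ((isUnit_iff_isUnit_det _).1 S.isUnit_P), submatrix_one_embedding,
    Matrix.one_mul]

theorem gcdMinors_eq (j : ℕ) :
    A.gcdMinors j = subprodGcd j (Finset.univ.val.map fun i => (S.a i).natAbs) := by
  rw [gcdMinors_eq_of_mul_eq S.eq_mul S.diagonal_eq, gcdMinors_diagonal]

theorem rank_map_intCast : (A.map (Int.cast : ℤ → ℚ)).rank = S.m := by
  let φ := Int.castRingHom ℚ
  have hA : A.map φ = (S.P.submatrix id S.f).map φ * (diagonal S.a).map φ * S.B.map φ := by
    rw [← Matrix.map_mul, ← Matrix.map_mul, ← S.eq_mul]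
  have hD : (diagonal S.a).map φ = ((S.P⁻¹).submatrix S.f id).map φ * A.map φ * S.C.map φ := by
    rw [S.diagonal_eq, Matrix.map_mul, Matrix.map_mul]
  rw [show A.map Int.cast = A.map φ from rfl, rank_eq_of_mul_eq hA hD,
    diagonal_map (map_zero φ), rank_diagonal]
  simp [φ, S.a_ne_zero]

theorem ncard_setOf_vecMul_map_eq_zero {q : ℕ} [NeZero q] :
    {u : α → ZMod q | u ᵥ* A.map (↑) = 0}.ncard =
      (∏ i, q.gcd (S.a i).natAbs) * q ^ (Fintype.card α - S.m) := by
  let φ := Int.castRingHom (ZMod q)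
  have hPq : IsUnit (S.P.map φ) := S.isUnit_P.map φ.mapMatrix
  have hset : {u : α → ZMod q | u ᵥ* A.map (↑) = 0} =
      (· ᵥ* S.P.map φ) ⁻¹' {v | ∀ i, v (S.f i) * (S.a i : ZMod q) = 0} := by
    ext u
    rw [Set.mem_ofPred_eq, show A.map Int.cast = A.map φ from rfl,
      vecMul_eq_zero_iff_of_mul_eq (B := (S.P.submatrix id S.f).map φ * (diagonal S.a).map φ)
        (Z := S.C.map φ) (by rw [← Matrix.map_mul, ← Matrix.map_mul, ← S.eq_mul])
        (by rw [← Matrix.map_mul, S.mul_eq, Matrix.map_mul]),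
      ← vecMul_vecMul, diagonal_map (map_zero φ), funext_iff]
    simp only [vecMul_diagonal, Pi.zero_apply]
    rfl
  rw [hset, Set.ncard_preimage_of_injective_subset_range (vecMul_injective_of_isUnit hPq)
    (by simp [(vecMul_surjective_iff_isUnit.2 hPq).range_eq]),
    Set.ncard_setOf_forall_apply_embedding S.f (fun i x => x * (S.a i : ZMod q) = 0)]
  simp [ZMod.ncard_setOf_mul_intCast_eq_zero]

end SmithFactorization

theorem ncard_setOf_vecMul_map_eq_zero (A : Matrix α ι ℤ) {q : ℕ} [NeZero q] :
    {u : α → ZMod q | u ᵥ* A.map (↑) = 0}.ncard =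
      (∏ ℓ ∈ Finset.Icc 1 (A.map (Int.cast : ℤ → ℚ)).rank,
        q.gcd (A.gcdMinors ℓ / A.gcdMinors (ℓ - 1))) *
        q ^ (Fintype.card α - (A.map (Int.cast : ℤ → ℚ)).rank) := by
  obtain ⟨S⟩ := A.nonempty_smithFactorization
  have hgcd := Multiset.prod_gcd_subprodGcd_div (Finset.univ.val.map fun i => (S.a i).natAbs)
    (by simpa using S.a_ne_zero) q
  rw [Multiset.card_map, Finset.card_val, Finset.card_univ, Fintype.card_fin, Multiset.map_map]
    at hgcd
  simp only [S.ncard_setOf_vecMul_map_eq_zero, S.rank_map_intCast, S.gcdMinors_eq, hgcd]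
  rfl

end Matrix

namespace ArrCode

theorem stmt3_general (k n : ℕ) (G : Matrix (Fin k) (Fin n) ℤ) (J : Finset (Fin n)) (q : ℕ) (hq : 0 < q) :
    (HJ G J q).ncard =
      (∏ ℓ ∈ Finset.Icc 1 (rk G J), Nat.gcd q (elemDiv G J ℓ)) * q ^ (k - rk G J) := by
  have : NeZero q := ⟨hq.ne'⟩
  have hH : HJ G J q =
      {u | Matrix.vecMul u ((G.submatrix id ((↑) : J → Fin n)).map (↑)) = 0} := by
    ext u
    simp only [HJ, Set.mem_ofPred_eq, funext_iff, Pi.zero_apply, Subtype.forall]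
    rfl
  rw [hH, Matrix.ncard_setOf_vecMul_map_eq_zero, Fintype.card_fin]
  -- `rk` and `minorGcd` unfold to `rank` and `gcdMinors` of the column submatrix.
  rfl

theorem stmt3 (k n : ℕ) (hk : 1 ≤ k) (hn : 1 ≤ n) (G : Matrix (Fin k) (Fin n) ℤ)
    (hG : ∀ j : Fin n, ∃ i : Fin k, G i j ≠ 0)
    (J : Finset (Fin n)) (q : ℕ) (hq : 0 < q) :
    (HJ G J q).ncard =
      (∏ ℓ ∈ Finset.Icc 1 (rk G J), Nat.gcd q (elemDiv G J ℓ)) * q ^ (k - rk G J) :=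
  stmt3_general k n G J q hq

end ArrCode
end

section
/- Let m ∈ {1,…,ρ₀}. (a) For every s ∈ {0,1,…,r(E)} there exists i ∈ {0,1,…,n} such that f_i^m is a nonzero polynomial of degree exactly s. (b) For every s ∈ {1,…,r(E)}, min{ i ∈ {0,…,n} : f_i^m is nonzero of degree s−1 } < min{ i ∈ {0,…,n} : f_i^m is nonzero of degree s } (both sets being nonempty by (a)). -/
open scoped BigOperators

/-!
Swapping the two sums, the coefficient of `t^s` in `f_i^m` is
`∑_{r(K) = r(E) - s} C(|K|, n - i) (-1)^{|K| - (n - i)} ∏ gcd(m, e_{ℓ,K}) / ∏ gcd(m, e_{ℓ,E})`.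
The binomial coefficient vanishes unless `|K| ≥ n - i`, so with `M(ρ)` the largest size of a set
of columns of rank `ρ`, this coefficient is zero for `i < n - M(r(E) - s)` and positive (only the
maximal sets contribute, all with sign `+`) for `i = n - M(r(E) - s)`. Adding a column outside the
span raises the rank by one, so `M` is strictly increasing on `[0, r(E)]`; hence the first index
`n - M(r(E) - s)` at which `t^s` appears is strictly increasing in `s`, which makes `f_i^m` of
degree exactly `s` there and gives both claims.
-/

namespace ArrCode

open Finset Polynomial Module Submodule

section FamilyRank

variable {K V ι : Type*} [DivisionRing K] [AddCommGroup V] [Module K V] [Module.Finite K V]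

theorem exists_finrank_span_image_insert_eq_succ (v : ι → V) {s : Set ι}
    (h : finrank K (span K (v '' s)) < finrank K (span K (Set.range v))) :
    ∃ j ∉ s, finrank K (span K (v '' insert j s)) = finrank K (span K (v '' s)) + 1 := by
  obtain ⟨j, hj⟩ : ∃ j, v j ∉ span K (v '' s) := by
    by_contra! hall
    have : span K (Set.range v) ≤ span K (v '' s) :=
      span_le.2 (Set.range_subset_iff.2 hall)
    exact (finrank_mono this).not_gt h
  refine ⟨j, fun hjs => hj (subset_span ⟨j, hjs, rfl⟩), ?_⟩
  rw [Set.image_insert_eq, span_insert, sup_comm, finrank_sup_span_singleton hj]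

end FamilyRank

variable {k n : ℕ}

theorem rk_eq_finrank_span (G : Matrix (Fin k) (Fin n) ℤ) (J : Finset (Fin n)) :
    rk G J = finrank ℚ (span ℚ ((fun j i => (G i j : ℚ)) '' J)) := by
  have hcols : Set.range (Matrix.of fun i (j : J) => (G i j : ℚ)).col
      = (fun j i => (G i j : ℚ)) '' J := by
    ext v
    constructor
    · rintro ⟨j, rfl⟩
      exact ⟨j, j.2, rfl⟩
    · rintro ⟨j, hj, rfl⟩
      exact ⟨⟨j, hj⟩, rfl⟩
  rw [rk, Matrix.rank_eq_finrank_span_cols, hcols]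

theorem rk_mono (G : Matrix (Fin k) (Fin n) ℤ) {J J' : Finset (Fin n)} (h : J ⊆ J') :
    rk G J ≤ rk G J' := by
  simp only [rk_eq_finrank_span]
  exact finrank_mono (span_mono (Set.image_mono (coe_subset.2 h)))

theorem rk_empty (G : Matrix (Fin k) (Fin n) ℤ) : rk G ∅ = 0 := by
  simp [rk_eq_finrank_span, coe_empty]

theorem exists_rk_insert_eq_succ (G : Matrix (Fin k) (Fin n) ℤ) {J : Finset (Fin n)}
    (h : rk G J < rk G univ) : ∃ j ∉ J, rk G (insert j J) = rk G J + 1 := by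
  rw [rk_eq_finrank_span, rk_eq_finrank_span, coe_univ, Set.image_univ] at h
  obtain ⟨j, hj, hrk⟩ := exists_finrank_span_image_insert_eq_succ _ h
  refine ⟨j, hj, ?_⟩
  rw [rk_eq_finrank_span, rk_eq_finrank_span, coe_insert, hrk]

section MaxCardOfRank

variable {ι : Type*} [Fintype ι] (f : Finset ι → ℕ)

noncomputable def maxCardOfRank (ρ : ℕ) : ℕ :=
  ((univ : Finset (Finset ι)).filter (f · = ρ)).sup card

theorem card_le_maxCardOfRank (J : Finset ι) : J.card ≤ maxCardOfRank f (f J) :=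
  le_sup (mem_filter.2 ⟨mem_univ J, rfl⟩)

theorem maxCardOfRank_le_card (ρ : ℕ) : maxCardOfRank f ρ ≤ Fintype.card ι :=
  Finset.sup_le fun J _ => card_le_univ J

theorem exists_card_eq_maxCardOfRank {ρ : ℕ} (h : ∃ J, f J = ρ) :
    ∃ J, f J = ρ ∧ J.card = maxCardOfRank f ρ := by
  obtain ⟨J₀, hJ₀⟩ := h
  obtain ⟨J, hJ, hsup⟩ :=
    exists_mem_eq_sup (univ.filter (f · = ρ)) ⟨J₀, by simpa using hJ₀⟩ card
  exact ⟨J, (mem_filter.1 hJ).2, hsup.symm⟩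

variable [DecidableEq ι] {f}

theorem exists_finset_eq_of_le
    (hstep : ∀ J, f J < f univ → ∃ j ∉ J, f (insert j J) = f J + 1) (hf0 : f ∅ = 0) {ρ : ℕ}
    (hρ : ρ ≤ f univ) : ∃ J, f J = ρ := by
  induction ρ with
  | zero => exact ⟨∅, hf0⟩
  | succ ρ ih =>
    obtain ⟨J, rfl⟩ := ih (by omega)
    obtain ⟨j, -, hj⟩ := hstep J (by omega)
    exact ⟨insert j J, hj⟩

theorem maxCardOfRank_strictMonoOn
    (hstep : ∀ J, f J < f univ → ∃ j ∉ J, f (insert j J) = f J + 1) (hf0 : f ∅ = 0) :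
    StrictMonoOn (maxCardOfRank f) (Set.Iic (f univ)) := by
  refine strictMonoOn_Iic_of_lt_succ fun ρ hρ => ?_
  obtain ⟨J, rfl, hcard⟩ :=
    exists_card_eq_maxCardOfRank f (exists_finset_eq_of_le hstep hf0 hρ.le)
  obtain ⟨j, hj, hrk⟩ := hstep J hρ
  calc maxCardOfRank f (f J) < (insert j J).card := by
        rw [card_insert_of_notMem hj, hcard]; omega
    _ ≤ maxCardOfRank f (Order.succ (f J)) := by
      rw [Order.succ_eq_add_one, ← hrk]; exact card_le_maxCardOfRank f _

end MaxCardOfRank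

theorem gcdProd_pos (G : Matrix (Fin k) (Fin n) ℤ) {m : ℕ} (hm : 0 < m) (J : Finset (Fin n)) :
    0 < gcdProd G m J :=
  prod_pos fun _ _ => Nat.gcd_pos_of_pos_left _ hm

theorem fPoly_eq_sum (G : Matrix (Fin k) (Fin n) ℤ) (m i : ℕ) :
    fPoly G m i = ∑ K : Finset (Fin n),
      C ((K.card.choose (n - i) : ℚ) *
          ((-1) ^ (K.card - (n - i)) * gcdProd G m K / gcdProd G m univ)) *
        X ^ (rk G univ - rk G K) := by
  rw [fPoly, sum_comm' (t' := univ) (s' := fun K => K.powersetCard (n - i))]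
  · refine sum_congr rfl fun K _ => ?_
    rw [sum_congr rfl fun J hJ => by rw [(mem_powersetCard.1 hJ).2], sum_const,
      card_powersetCard, nsmul_eq_mul, C_mul, C_eq_natCast, mul_assoc]
  · intro J K
    simp only [mem_filter, mem_powerset, mem_powersetCard, subset_univ, mem_univ, true_and]
    tauto

theorem coeff_fPoly (G : Matrix (Fin k) (Fin n) ℤ) (m i s : ℕ) :
    (fPoly G m i).coeff s = ∑ K ∈ univ.filter (fun K => rk G univ - rk G K = s),
      (K.card.choose (n - i) : ℚ) *
        ((-1) ^ (K.card - (n - i)) * gcdProd G m K / gcdProd G m univ) := by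
  rw [fPoly_eq_sum, finsetSum_coeff, sum_filter]
  exact sum_congr rfl fun K _ => by rw [coeff_C_mul_X_pow]; exact if_congr eq_comm rfl rfl

noncomputable def firstIndex (G : Matrix (Fin k) (Fin n) ℤ) (s : ℕ) : ℕ :=
  n - maxCardOfRank (rk G) (rk G univ - s)

theorem firstIndex_add_maxCardOfRank (G : Matrix (Fin k) (Fin n) ℤ) (s : ℕ) :
    firstIndex G s + maxCardOfRank (rk G) (rk G univ - s) = n :=
  Nat.sub_add_cancel ((maxCardOfRank_le_card _ _).trans_eq (Fintype.card_fin n))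

theorem firstIndex_strictMonoOn (G : Matrix (Fin k) (Fin n) ℤ) :
    StrictMonoOn (firstIndex G) (Set.Iic (rk G univ)) := by
  intro s hs t ht hst
  have hmax := maxCardOfRank_strictMonoOn (fun _ => exists_rk_insert_eq_succ G) (rk_empty G)
    (Set.mem_Iic.2 (Nat.sub_le _ t)) (Set.mem_Iic.2 (Nat.sub_le _ s))
    (by simp only [Set.mem_Iic] at hs ht; omega)
  have := firstIndex_add_maxCardOfRank G s
  have := firstIndex_add_maxCardOfRank G t
  omega

theorem rk_eq_sub_of_sub_eq (G : Matrix (Fin k) (Fin n) ℤ) {K : Finset (Fin n)} {s : ℕ}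
    (h : rk G univ - rk G K = s) : rk G K = rk G univ - s := by
  have := rk_mono G (subset_univ K)
  omega

theorem coeff_fPoly_eq_zero_of_lt_firstIndex (G : Matrix (Fin k) (Fin n) ℤ) (m : ℕ) {i s : ℕ}
    (hi : i < firstIndex G s) : (fPoly G m i).coeff s = 0 := by
  rw [coeff_fPoly]
  refine sum_eq_zero fun K hK => ?_
  have hcard := card_le_maxCardOfRank (rk G) K
  rw [rk_eq_sub_of_sub_eq G (mem_filter.1 hK).2] at hcard
  have := firstIndex_add_maxCardOfRank G s
  rw [Nat.choose_eq_zero_of_lt (by omega), Nat.cast_zero, zero_mul]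

theorem coeff_fPoly_eq_zero_of_rk_lt (G : Matrix (Fin k) (Fin n) ℤ) (m i : ℕ) {s : ℕ}
    (hs : rk G univ < s) : (fPoly G m i).coeff s = 0 := by
  rw [coeff_fPoly]
  exact sum_eq_zero fun K hK => absurd (mem_filter.1 hK).2 (by omega)

theorem coeff_fPoly_firstIndex_pos (G : Matrix (Fin k) (Fin n) ℤ) {m : ℕ} (hm : 0 < m) {s : ℕ}
    (hs : s ≤ rk G univ) : 0 < (fPoly G m (firstIndex G s)).coeff s := by
  set M := maxCardOfRank (rk G) (rk G univ - s)
  have hn : n - firstIndex G s = M := by have := firstIndex_add_maxCardOfRank G s; omega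
  have hratio : ∀ K, (0 : ℚ) < gcdProd G m K / gcdProd G m univ := fun K =>
    div_pos (by exact_mod_cast gcdProd_pos G hm K) (by exact_mod_cast gcdProd_pos G hm univ)
  obtain ⟨K₀, hK₀, hcard₀⟩ := exists_card_eq_maxCardOfRank (rk G)
    (exists_finset_eq_of_le (fun _ => exists_rk_insert_eq_succ G) (rk_empty G)
      (Nat.sub_le _ s))
  rw [coeff_fPoly, hn]
  refine sum_pos' (fun K hK => ?_) ⟨K₀, mem_filter.2 ⟨mem_univ _, by omega⟩, ?_⟩
  · have hcard := card_le_maxCardOfRank (rk G) K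
    rw [rk_eq_sub_of_sub_eq G (mem_filter.1 hK).2] at hcard
    rcases hcard.lt_or_eq with hlt | heq
    · rw [Nat.choose_eq_zero_of_lt hlt, Nat.cast_zero, zero_mul]
    · rw [heq, Nat.choose_self, Nat.sub_self, pow_zero]
      simpa using (hratio K).le
  · rw [hcard₀, Nat.choose_self, Nat.sub_self, pow_zero]
    simpa using hratio K₀

theorem isLeast_firstIndex (G : Matrix (Fin k) (Fin n) ℤ) {m : ℕ} (hm : 0 < m) {s : ℕ}
    (hs : s ≤ rk G univ) :
    IsLeast {i | i ≤ n ∧ fPoly G m i ≠ 0 ∧ (fPoly G m i).natDegree = s} (firstIndex G s) := by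
  have hpos := coeff_fPoly_firstIndex_pos G hm hs
  have hne : fPoly G m (firstIndex G s) ≠ 0 := fun h => by simp [h] at hpos
  refine ⟨⟨Nat.sub_le _ _, hne, natDegree_eq_of_le_of_coeff_ne_zero ?_ hpos.ne'⟩, ?_⟩
  · refine natDegree_le_iff_coeff_eq_zero.2 fun N hN => ?_
    rcases le_or_gt N (rk G univ) with hNr | hNr
    · exact coeff_fPoly_eq_zero_of_lt_firstIndex G m (firstIndex_strictMonoOn G hs hNr hN)
    · exact coeff_fPoly_eq_zero_of_rk_lt G m _ hNr
  · rintro i ⟨-, hi, rfl⟩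
    by_contra! hlt
    exact leadingCoeff_ne_zero.2 hi (coeff_fPoly_eq_zero_of_lt_firstIndex G m hlt)

theorem stmt7_general (k n : ℕ) (G : Matrix (Fin k) (Fin n) ℤ)
    (m : ℕ) (hm1 : 1 ≤ m) :
    (∀ s ≤ rk G Finset.univ, ∃ i ≤ n,
        fPoly G m i ≠ 0 ∧ (fPoly G m i).natDegree = s) ∧
    (∀ s : ℕ, 1 ≤ s → s ≤ rk G Finset.univ →
        sInf {i : ℕ | i ≤ n ∧ fPoly G m i ≠ 0 ∧ (fPoly G m i).natDegree = s - 1} <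
        sInf {i : ℕ | i ≤ n ∧ fPoly G m i ≠ 0 ∧ (fPoly G m i).natDegree = s}) := by
  refine ⟨fun s hs => ⟨firstIndex G s, (isLeast_firstIndex G hm1 hs).1⟩, 
    fun s hs1 hs2 => ?_⟩
  rw [(isLeast_firstIndex G hm1 (Nat.sub_le_of_le_add (by omega))).csInf_eq,
    (isLeast_firstIndex G hm1 hs2).csInf_eq]
  exact firstIndex_strictMonoOn G (Set.mem_Iic.2 (by omega)) hs2 (by omega)

theorem stmt7 (k n : ℕ) (hk : 1 ≤ k) (hn : 1 ≤ n) (G : Matrix (Fin k) (Fin n) ℤ)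
    (hG : ∀ j : Fin n, ∃ i : Fin k, G i j ≠ 0)
    (m : ℕ) (hm1 : 1 ≤ m) (hm2 : m ≤ lcmPeriod G) :
    (∀ s ≤ rk G Finset.univ, ∃ i ≤ n,
        fPoly G m i ≠ 0 ∧ (fPoly G m i).natDegree = s) ∧
    (∀ s : ℕ, 1 ≤ s → s ≤ rk G Finset.univ →
        sInf {i : ℕ | i ≤ n ∧ fPoly G m i ≠ 0 ∧ (fPoly G m i).natDegree = s - 1} <
        sInf {i : ℕ | i ≤ n ∧ fPoly G m i ≠ 0 ∧ (fPoly G m i).natDegree = s}) :=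
  stmt7_general k n G m hm1

end ArrCode
end

section
/- Let k ≥ 2 and q ≥ 2 be integers. The minimum weight (least Hamming weight of a nonzero codeword) of N_k(q) equals k if k < 4 and equals 4 if k ≥ 4; the minimum weight of Z_k(q) equals k+1 if k < 4 and equals 4 if k ≥ 4. -/
open scoped BigOperators

namespace ArrCode

/-- The matrix `Ñ_k = (I_k ∣ J_k − I_k)`. -/
def Ntilde (k : ℕ) : Matrix (Fin k) (Fin (2 * k)) ℤ :=
  Matrix.of fun i j =>
    if (j : ℕ) < k then (if (i : ℕ) = (j : ℕ) then 1 else 0)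
    else (if (i : ℕ) = (j : ℕ) - k then 0 else 1)

/-- The matrix `Ž_k = (I_k ∣ J_k − I_k ∣ 1_k)`. -/
def Ztilde (k : ℕ) : Matrix (Fin k) (Fin (2 * k + 1)) ℤ :=
  Matrix.of fun i j =>
    if (j : ℕ) < k then (if (i : ℕ) = (j : ℕ) then 1 else 0)
    else if (j : ℕ) < 2 * k then (if (i : ℕ) = (j : ℕ) - k then 0 else 1)
    else 1

/-
With `s = ∑ᵢ uᵢ`, the codeword `uÑ_k` is `(u, s·1 − u)` and `uŽ_k` is `(u, s·1 − u, s)`.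
If `s ≠ 0`, no index has both `uᵢ = 0` and `s − uᵢ = 0`, so the weight is at least `k`
(plus one for the last coordinate of `uŽ_k`). If `s = 0` and `u ≠ 0`, then `u` has at least
two nonzero entries, and they reappear negated in `s·1 − u`, so the weight is at least `4`.
Both bounds are attained, by `u = e₀` and by `u = e₀ − e₁`.
-/

open Finset Matrix

section HammingNorm

variable {ι R : Type*} [Fintype ι] [DecidableEq R]

lemma card_le_hammingNorm_add_hammingNorm [Zero R] {f g : ι → R}
    (h : ∀ i, f i ≠ 0 ∨ g i ≠ 0) : Fintype.card ι ≤ hammingNorm f + hammingNorm g := by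
  classical
  calc Fintype.card ι = #(univ : Finset ι) := card_univ.symm
    _ ≤ #(({i | f i ≠ 0} : Finset ι) ∪ ({i | g i ≠ 0} : Finset ι)) :=
        card_le_card fun i _ => by simpa [mem_union] using h i
    _ ≤ hammingNorm f + hammingNorm g := card_union_le _ _

lemma hammingNorm_add_hammingNorm_le_card [Zero R] {f g : ι → R}
    (h : ∀ i, f i = 0 ∨ g i = 0) : hammingNorm f + hammingNorm g ≤ Fintype.card ι := by
  classical
  calc hammingNorm f + hammingNorm g
        = #(({i | f i ≠ 0} : Finset ι) ∪ ({i | g i ≠ 0} : Finset ι)) := by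
        refine (card_union_of_disjoint (disjoint_left.2 fun i hf hg => ?_)).symm
        simp only [mem_filter, mem_univ, true_and] at hf hg
        exact (h i).elim hf hg
    _ ≤ Fintype.card ι := card_le_univ _

lemma two_le_hammingNorm_of_sum_eq_zero [AddCommMonoid R] {u : ι → R} (hu : u ≠ 0)
    (hs : ∑ i, u i = 0) : 2 ≤ hammingNorm u := by
  by_contra! h
  obtain ⟨i, hi⟩ : ∃ i, ({j | u j ≠ 0} : Finset ι) = {i} :=
    card_eq_one.1 (by have := hammingNorm_pos_iff.2 hu; unfold hammingNorm at *; omega)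
  have hui : u i ≠ 0 := by simpa using hi.ge (mem_singleton_self i)
  rw [← sum_filter_ne_zero, hi, sum_singleton] at hs
  exact hui hs

lemma hammingNorm_neg [AddGroup R] (u : ι → R) : hammingNorm (-u) = hammingNorm u :=
  hammingNorm_comp (fun _ => Neg.neg) (fun _ => neg_injective) (fun _ => neg_zero)

variable [AddCommGroup R]

lemma card_le_hammingNorm_add_hammingNorm_const_sub {u : ι → R} (hs : ∑ i, u i ≠ 0) :
    Fintype.card ι ≤ hammingNorm u + hammingNorm (Function.const ι (∑ i, u i) - u) := by
  refine card_le_hammingNorm_add_hammingNorm fun i => ?_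
  by_contra! h
  rw [Pi.sub_apply, Function.const_apply, h.1, sub_zero] at h
  exact hs h.2

lemma four_le_hammingNorm_add_hammingNorm_const_sub {u : ι → R} (hu : u ≠ 0)
    (hs : ∑ i, u i = 0) :
    4 ≤ hammingNorm u + hammingNorm (Function.const ι (∑ i, u i) - u) := by
  have h2 := two_le_hammingNorm_of_sum_eq_zero hu hs
  rw [hs, Function.const_zero, zero_sub, hammingNorm_neg]
  omega

variable [DecidableEq ι]

lemma hammingNorm_single_add_hammingNorm_const_sub_le (i : ι) (a : R) :
    hammingNorm (Pi.single i a : ι → R) +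
      hammingNorm (Function.const ι (∑ j, (Pi.single i a : ι → R) j) - Pi.single i a) ≤
      Fintype.card ι := by
  refine hammingNorm_add_hammingNorm_le_card fun j => ?_
  rw [sum_pi_single', if_pos (mem_univ i), Pi.sub_apply, Function.const_apply, sub_eq_zero]
  by_cases hj : j = i
  · subst hj; simp
  · simp [hj]

lemma hammingNorm_sub_single_add_hammingNorm_const_sub_le (i j : ι) (a : R) :
    hammingNorm (Pi.single i a - Pi.single j a : ι → R) +
      hammingNorm (Function.const ι (∑ l, (Pi.single i a - Pi.single j a : ι → R) l) -
        (Pi.single i a - Pi.single j a)) ≤ 4 := by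
  have hs : ∑ l, (Pi.single i a - Pi.single j a : ι → R) l = 0 := by simp
  have h2 : hammingNorm (Pi.single i a - Pi.single j a : ι → R) ≤ 2 := by
    refine (card_le_card fun l hl => ?_).trans (card_le_two (a := i) (b := j))
    by_contra hl'
    simp only [mem_insert, mem_singleton, not_or] at hl'
    simp [Pi.single_apply, hl'.1, hl'.2] at hl
  rw [hs, Function.const_zero, zero_sub, hammingNorm_neg]
  omega

end HammingNorm

lemma minWt_le_hammingNorm {k n q : ℕ} (G : Matrix (Fin k) (Fin n) ℤ) {u : Fin k → ZMod q}
    (hc : vecMul u (Gmod G q) ≠ 0) : minWt G q ≤ hammingNorm (vecMul u (Gmod G q)) :=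
  (iInf_le _ _).trans <| (iInf_le _ ⟨u, rfl⟩).trans (iInf_le _ hc)

lemma le_minWt {k n q m : ℕ} (G : Matrix (Fin k) (Fin n) ℤ)
    (h : ∀ u : Fin k → ZMod q, vecMul u (Gmod G q) ≠ 0 →
      m ≤ hammingNorm (vecMul u (Gmod G q))) :
    (m : ℕ∞) ≤ minWt G q := by
  refine le_iInf₂ fun c ⟨u, hu⟩ => le_iInf fun hc => ?_
  subst hu
  exact Nat.cast_le.2 (h u hc)

section Codewords

variable {k q : ℕ} (u : Fin k → ZMod q)

lemma vecMul_Ntilde_apply_of_lt (i : Fin k) :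
    vecMul u (Gmod (Ntilde k) q) ⟨i, by omega⟩ = u i := by
  simp [vecMul, dotProduct, Gmod, Ntilde, ← Fin.ext_iff]

lemma vecMul_Ntilde_apply_add (i : Fin k) :
    vecMul u (Gmod (Ntilde k) q) ⟨k + i, by omega⟩ = ∑ j, u j - u i := by
  simp [vecMul, dotProduct, Gmod, Ntilde, ← Fin.ext_iff, sum_ite, filter_ne', sum_erase_eq_sub]

lemma vecMul_Ztilde_castSucc (j : Fin (2 * k)) :
    vecMul u (Gmod (Ztilde k) q) j.castSucc = vecMul u (Gmod (Ntilde k) q) j := by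
  simp [vecMul, dotProduct, Gmod, Ntilde, Ztilde]

lemma vecMul_Ztilde_last :
    vecMul u (Gmod (Ztilde k) q) (Fin.last _) = ∑ j, u j := by
  simp [vecMul, dotProduct, Gmod, Ztilde, show ¬ 2 * k < k by omega]

lemma hammingNorm_vecMul_Ntilde :
    hammingNorm (vecMul u (Gmod (Ntilde k) q)) =
      hammingNorm u + hammingNorm (Function.const (Fin k) (∑ j, u j) - u) := by
  simp only [hammingNorm, card_filter]
  rw [← Fin.sum_congr' _ (two_mul k).symm, Fin.sum_univ_add]
  congr 1
  · exact sum_congr rfl fun i _ => by rw [← vecMul_Ntilde_apply_of_lt u i]; rfl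
  · refine sum_congr rfl fun i _ => ?_
    rw [Pi.sub_apply, Function.const_apply, ← vecMul_Ntilde_apply_add u i]
    rfl

lemma hammingNorm_vecMul_Ztilde :
    hammingNorm (vecMul u (Gmod (Ztilde k) q)) =
      hammingNorm (vecMul u (Gmod (Ntilde k) q)) + if ∑ j, u j ≠ 0 then 1 else 0 := by
  simp only [hammingNorm, card_filter]
  rw [Fin.sum_univ_castSucc]
  simp only [vecMul_Ztilde_castSucc, vecMul_Ztilde_last]

variable {u}

lemma minWt_Ntilde_le (hu : u ≠ 0) :
    minWt (Ntilde k) q ≤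
      (hammingNorm u + hammingNorm (Function.const (Fin k) (∑ j, u j) - u) : ℕ) := by
  have hc : vecMul u (Gmod (Ntilde k) q) ≠ 0 := by
    rw [← hammingNorm_pos_iff, hammingNorm_vecMul_Ntilde]
    exact Nat.add_pos_left (hammingNorm_pos_iff.2 hu) _
  exact hammingNorm_vecMul_Ntilde u ▸ minWt_le_hammingNorm _ hc

lemma minWt_Ztilde_le (hu : u ≠ 0) :
    minWt (Ztilde k) q ≤
      (hammingNorm u + hammingNorm (Function.const (Fin k) (∑ j, u j) - u) +
        if ∑ j, u j ≠ 0 then 1 else 0 : ℕ) := by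
  have hc : vecMul u (Gmod (Ztilde k) q) ≠ 0 := by
    rw [← hammingNorm_pos_iff, hammingNorm_vecMul_Ztilde, hammingNorm_vecMul_Ntilde]
    exact Nat.add_pos_left (Nat.add_pos_left (hammingNorm_pos_iff.2 hu) _) _
  exact hammingNorm_vecMul_Ntilde u ▸ hammingNorm_vecMul_Ztilde u ▸ minWt_le_hammingNorm _ hc

end Codewords

theorem minWt_Ntilde {k q : ℕ} [Nontrivial (ZMod q)] (hk : 2 ≤ k) :
    minWt (Ntilde k) q = (min k 4 : ℕ) := by
  set i₀ : Fin k := ⟨0, by omega⟩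
  set i₁ : Fin k := ⟨1, by omega⟩
  refine le_antisymm ?_ (le_minWt _ fun u hc => ?_)
  · rcases le_total k 4 with hk4 | hk4
    · have hu : (Pi.single i₀ 1 : Fin k → ZMod q) ≠ 0 := Pi.single_ne_zero_iff.2 one_ne_zero
      refine (minWt_Ntilde_le hu).trans (Nat.cast_le.2 ?_)
      rw [min_eq_left hk4]
      simpa using hammingNorm_single_add_hammingNorm_const_sub_le i₀ (1 : ZMod q)
    · have hu : (Pi.single i₀ 1 - Pi.single i₁ 1 : Fin k → ZMod q) ≠ 0 := fun h => by
        simpa [i₀, i₁] using congr_fun h i₀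
      refine (minWt_Ntilde_le hu).trans (Nat.cast_le.2 ?_)
      rw [min_eq_right hk4]
      exact hammingNorm_sub_single_add_hammingNorm_const_sub_le i₀ i₁ (1 : ZMod q)
  · have hu : u ≠ 0 := by rintro rfl; exact hc (zero_vecMul _)
    rw [hammingNorm_vecMul_Ntilde]
    by_cases hs : ∑ i, u i = 0
    · exact (min_le_right _ _).trans (four_le_hammingNorm_add_hammingNorm_const_sub hu hs)
    · simpa using (min_le_left _ _).trans (card_le_hammingNorm_add_hammingNorm_const_sub hs)

theorem minWt_Ztilde {k q : ℕ} [Nontrivial (ZMod q)] (hk : 2 ≤ k) :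
    minWt (Ztilde k) q = (min (k + 1) 4 : ℕ) := by
  set i₀ : Fin k := ⟨0, by omega⟩
  set i₁ : Fin k := ⟨1, by omega⟩
  refine le_antisymm ?_ (le_minWt _ fun u hc => ?_)
  · rcases le_total (k + 1) 4 with hk4 | hk4
    · have hu : (Pi.single i₀ 1 : Fin k → ZMod q) ≠ 0 := Pi.single_ne_zero_iff.2 one_ne_zero
      refine (minWt_Ztilde_le hu).trans (Nat.cast_le.2 ?_)
      rw [min_eq_left hk4]
      simpa using hammingNorm_single_add_hammingNorm_const_sub_le i₀ (1 : ZMod q)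
    · have hu : (Pi.single i₀ 1 - Pi.single i₁ 1 : Fin k → ZMod q) ≠ 0 := fun h => by
        simpa [i₀, i₁] using congr_fun h i₀
      refine (minWt_Ztilde_le hu).trans (Nat.cast_le.2 ?_)
      rw [min_eq_right hk4]
      simpa using hammingNorm_sub_single_add_hammingNorm_const_sub_le i₀ i₁ (1 : ZMod q)
  · have hu : u ≠ 0 := by rintro rfl; exact hc (zero_vecMul _)
    rw [hammingNorm_vecMul_Ztilde, hammingNorm_vecMul_Ntilde]
    by_cases hs : ∑ i, u i = 0
    · rw [if_neg (not_not.2 hs), add_zero]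
      exact (min_le_right _ _).trans (four_le_hammingNorm_add_hammingNorm_const_sub hu hs)
    · rw [if_pos hs]
      have hk' := card_le_hammingNorm_add_hammingNorm_const_sub hs
      rw [Fintype.card_fin] at hk'
      exact (min_le_left _ _).trans (Nat.add_le_add_right hk' 1)

theorem stmt17 (k q : ℕ) (hk : 2 ≤ k) (hq : 2 ≤ q) :
    minWt (Ntilde k) q = (if k < 4 then (k : ℕ∞) else 4) ∧
    minWt (Ztilde k) q = (if k < 4 then ((k : ℕ∞) + 1) else 4) := by
  have : Fact (1 < q) := ⟨hq⟩
  rw [minWt_Ntilde hk, minWt_Ztilde hk]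
  constructor <;> split_ifs with h
  · rw [min_eq_left (by omega)]
  · rw [min_eq_right (by omega)]; rfl
  · rw [min_eq_left (by omega)]; push_cast; rfl
  · rw [min_eq_right (by omega)]; rfl

end ArrCode
end
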